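/- Let Q ∈ ℝ^{P×d}, K ∈ ℝ^{N×d}, α ≥ 0, β > 0. Define E(Q; K) = (α/2) trace(KKᵀ) − ∑ᵢ lse(Q kᵢᵀ, β) and E(K) = log ∑ᵢ exp(½ ‖kᵢ‖²). Then the gradient of the log posterior log p(K|Q) := −E(Q; K) − E(K) (up to an additive constant) with respect to K is softmax₂(β K Qᵀ) Q − (αI + D(softmax(½ diag(KKᵀ)))) K, where diag(KKᵀ) ∈ ℝᴺ is the vector of squared row norms (½‖kᵢ‖²)-type entries and D maps a vector to a diagonal matrix. -/

import Mathlib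

/-!
The derivative of `log ∑ᵢ exp fᵢ` is the softmax-weighted average of the derivatives of the `fᵢ`.
Both log-sum-exp terms of the log posterior are built from functions of single rows of `K`, and
the derivative of a function of the rows is the Frobenius pairing `H ↦ ∑ᵢ Gᵢ ⬝ᵥ Hᵢ` with the
matrix `G` of row gradients; for the attention term the row gradient is `Qᵀ softmax(β Q kᵢ)`.
-/

open Finset Real

noncomputable def softmax {ι : Type*} [Fintype ι] (v : ι → ℝ) (i : ι) : ℝ :=
  exp (v i) / ∑ j, exp (v j)

theorem HasFDerivAt.log_sum_exp {ι E : Type*} [Fintype ι] [NormedAddCommGroup E]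
    [NormedSpace ℝ E] {f : ι → E → ℝ} {f' : ι → E →L[ℝ] ℝ} {x : E}
    (hf : ∀ i, HasFDerivAt (f i) (f' i) x) :
    HasFDerivAt (fun y => Real.log (∑ i, Real.exp (f i y))) (∑ i, softmax (f · x) i • f' i) x := by
  cases isEmpty_or_nonempty ι
  · simpa using hasFDerivAt_const 0 x
  have hpos : 0 < ∑ j, Real.exp (f j x) := sum_pos (fun j _ => Real.exp_pos _) univ_nonempty
  convert (HasFDerivAt.fun_sum fun i _ => (hf i).exp).log hpos.ne' using 1
  simp only [softmax, div_eq_inv_mul, mul_smul, Finset.smul_sum]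

section

variable {ι κ : Type*} [Fintype ι] [Fintype κ]

noncomputable def dotProductCLM (v : κ → ℝ) : (κ → ℝ) →L[ℝ] ℝ :=
  LinearMap.toContinuousLinearMap (dotProductBilin ℝ ℝ v)

@[simp]
theorem dotProductCLM_apply (v x : κ → ℝ) : dotProductCLM v x = v ⬝ᵥ x := rfl

theorem hasFDerivAt_dotProduct (v x : κ → ℝ) : HasFDerivAt (v ⬝ᵥ ·) (dotProductCLM v) x :=
  (dotProductCLM v).hasFDerivAt

theorem hasFDerivAt_half_mul_sum_sq (c : ℝ) (x : κ → ℝ) :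
    HasFDerivAt (fun y : κ → ℝ => c / 2 * ∑ k, y k ^ 2) (dotProductCLM (c • x)) x := by
  refine ((HasFDerivAt.fun_sum fun k _ => (hasFDerivAt_apply k x).pow 2).const_mul
    (c / 2)).congr_fderiv (ContinuousLinearMap.ext fun h => ?_)
  simp only [smul_apply, FunLike.coe_sum, Finset.sum_apply, ContinuousLinearMap.proj_apply,
    dotProductCLM_apply, dotProduct, Pi.smul_apply, smul_eq_mul, Finset.mul_sum]
  exact sum_congr rfl fun k _ => by push_cast; ring

theorem hasFDerivAt_lse_attention (Q : ι → κ → ℝ) {β : ℝ} (hβ : β ≠ 0) (x : κ → ℝ) :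
    HasFDerivAt (fun y => β⁻¹ * log (∑ j, exp (β * ∑ k, Q j k * y k)))
      (dotProductCLM (∑ j, softmax (fun j => β * ∑ k, Q j k * x k) j • Q j)) x := by
  refine ((HasFDerivAt.log_sum_exp fun j =>
    (hasFDerivAt_dotProduct (Q j) x).const_mul β).const_mul β⁻¹).congr_fderiv
    (ContinuousLinearMap.ext fun h => ?_)
  simp only [smul_apply, FunLike.coe_sum, Finset.sum_apply, dotProductCLM_apply,
    Finset.smul_sum, sum_dotProduct, smul_dotProduct, smul_comm β⁻¹, smul_inv_smul₀ hβ]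
  rfl

noncomputable def frobeniusInnerCLM (G : ι → κ → ℝ) : (ι → κ → ℝ) →L[ℝ] ℝ :=
  ∑ i, (dotProductCLM (G i)).comp (ContinuousLinearMap.proj i)

theorem frobeniusInnerCLM_apply (G H : ι → κ → ℝ) :
    frobeniusInnerCLM G H = ∑ i, G i ⬝ᵥ H i := by
  simp [frobeniusInnerCLM]

theorem hasFDerivAt_sum_rows {g : ι → (κ → ℝ) → ℝ} {G K : ι → κ → ℝ}
    (hg : ∀ i, HasFDerivAt (g i) (dotProductCLM (G i)) (K i)) :
    HasFDerivAt (fun M => ∑ i, g i (M i)) (frobeniusInnerCLM G) K :=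
  HasFDerivAt.fun_sum fun i _ => (hg i).comp K (hasFDerivAt_apply i K)

theorem hasFDerivAt_log_sum_exp_rows {g : ι → (κ → ℝ) → ℝ} {G K : ι → κ → ℝ}
    (hg : ∀ i, HasFDerivAt (g i) (dotProductCLM (G i)) (K i)) :
    HasFDerivAt (fun M => log (∑ i, exp (g i (M i))))
      (frobeniusInnerCLM fun i => softmax (fun i => g i (K i)) i • G i) K := by
  refine (HasFDerivAt.log_sum_exp fun i => (hg i).comp K (hasFDerivAt_apply i K)).congr_fderiv
    (ContinuousLinearMap.ext fun H => ?_)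
  simp [frobeniusInnerCLM_apply]

end

theorem grad_log_posterior_general (P N d : ℕ) (α β : ℝ) (hβ : 0 < β)
    (Q : Fin P → Fin d → ℝ) (K : Fin N → Fin d → ℝ) :
    DifferentiableAt ℝ
      (fun M : Fin N → Fin d → ℝ =>
        -((α / 2) * (∑ i, ∑ j, M i j ^ 2) -
            ∑ i, β⁻¹ * Real.log (∑ j, Real.exp (β * ∑ m, Q j m * M i m))) -
          Real.log (∑ i, Real.exp ((1 / 2) * ∑ j, M i j ^ 2))) K ∧
    ∀ H : Fin N → Fin d → ℝ,
      fderiv ℝ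
        (fun M : Fin N → Fin d → ℝ =>
          -((α / 2) * (∑ i, ∑ j, M i j ^ 2) -
              ∑ i, β⁻¹ * Real.log (∑ j, Real.exp (β * ∑ m, Q j m * M i m))) -
            Real.log (∑ i, Real.exp ((1 / 2) * ∑ j, M i j ^ 2))) K H =
      ∑ p, ∑ q,
        ((∑ j, (Real.exp (β * ∑ m, K p m * Q j m) /
              ∑ j', Real.exp (β * ∑ m, K p m * Q j' m)) * Q j q) -
          (α * K p q +
            (Real.exp ((1 / 2) * ∑ j, K p j ^ 2) /
                ∑ i, Real.exp ((1 / 2) * ∑ j, K i j ^ 2)) * K p q)) * H p q := by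
  have hquad := hasFDerivAt_sum_rows fun i => hasFDerivAt_half_mul_sum_sq α (K i)
  simp only [← Finset.mul_sum] at hquad
  have hattn := hasFDerivAt_sum_rows fun i => hasFDerivAt_lse_attention Q hβ.ne' (K i)
  have hprior := hasFDerivAt_log_sum_exp_rows fun i => hasFDerivAt_half_mul_sum_sq 1 (K i)
  have hf := (hquad.fun_sub hattn).fun_neg.fun_sub hprior
  refine ⟨hf.differentiableAt, fun H => ?_⟩
  have hcomm : ∀ p j, ∑ m, K p m * Q j m = ∑ m, Q j m * K p m := fun p j => dotProduct_comm _ _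
  rw [hf.fderiv]
  simp only [softmax, neg_sub, one_div, one_smul, sub_apply, frobeniusInnerCLM_apply, dotProduct,
    Finset.sum_apply, Pi.smul_apply, smul_eq_mul, hcomm, sub_mul, add_mul, sum_sub_distrib,
    sum_add_distrib]
  ring

/-- For `E(Q;K) = (α/2) trace(KKᵀ) − ∑ᵢ lse(Q kᵢᵀ, β)` and
`E(K) = log ∑ᵢ exp(½‖kᵢ‖²)`, the gradient of the log posterior
`log p(K|Q) = −E(Q;K) − E(K)` (up to an additive constant) is
`softmax₂(β K Qᵀ) Q − (α I + D(softmax(½ diag(KKᵀ)))) K`. -/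
theorem grad_log_posterior (P N d : ℕ) (α β : ℝ) (hα : 0 ≤ α) (hβ : 0 < β)
    (Q : Fin P → Fin d → ℝ) (K : Fin N → Fin d → ℝ) :
    DifferentiableAt ℝ
      (fun M : Fin N → Fin d → ℝ =>
        -((α / 2) * (∑ i, ∑ j, M i j ^ 2) -
            ∑ i, β⁻¹ * Real.log (∑ j, Real.exp (β * ∑ m, Q j m * M i m))) -
          Real.log (∑ i, Real.exp ((1 / 2) * ∑ j, M i j ^ 2))) K ∧
    ∀ H : Fin N → Fin d → ℝ,
      fderiv ℝ
        (fun M : Fin N → Fin d → ℝ =>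
          -((α / 2) * (∑ i, ∑ j, M i j ^ 2) -
              ∑ i, β⁻¹ * Real.log (∑ j, Real.exp (β * ∑ m, Q j m * M i m))) -
            Real.log (∑ i, Real.exp ((1 / 2) * ∑ j, M i j ^ 2))) K H =
      ∑ p, ∑ q,
        ((∑ j, (Real.exp (β * ∑ m, K p m * Q j m) /
              ∑ j', Real.exp (β * ∑ m, K p m * Q j' m)) * Q j q) -
          (α * K p q +
            (Real.exp ((1 / 2) * ∑ j, K p j ^ 2) /
                ∑ i, Real.exp ((1 / 2) * ∑ j, K i j ^ 2)) * K p q)) * H p q :=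
  grad_log_posterior_general P N d α β hβ Q K
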